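/- If P is a collection of pairwise non-crossing (i.e., mutually weakly ordered northwest-southeast) lattice paths contained in a partial staircase L, then the number of distinct paths in P is at most N(L) + 1, the number of critical nodes of L plus one. -/

import Mathlib

open Finset

/-- Pairs `{u<v}` and `{x<y}` (values in `ℕ ∪ {∞}`) are non-nesting if
neither `x<u<v<y` nor `u<x<y<v`. -/
def PairNonNesting (u v x y : WithTop ℕ) : Prop :=
  ¬ (x < u ∧ u < v ∧ v < y) ∧ ¬ (u < x ∧ x < y ∧ y < v)

/-- Pairs `{u<v}` and `{x<y}` are non-crossing if neither `x<u<y<v` nor `u<x<v<y`. -/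
def PairNonCrossing (u v x y : WithTop ℕ) : Prop :=
  ¬ (x < u ∧ u < y ∧ y < v) ∧ ¬ (u < x ∧ x < v ∧ v < y)

/-- Remove one common entry (equal entries in equal positions) from the two lists. -/
def stripOnce (I J : List ℕ) : Option (List ℕ × List ℕ) :=
  ((List.range (min I.length J.length)).find? (fun s => I.getD s 0 == J.getD s 0)).map
    (fun s => (I.eraseIdx s, J.eraseIdx s))

def stripAux : ℕ → List ℕ → List ℕ → List ℕ × List ℕ
  | 0, I, J => (I, J)
  | n+1, I, J =>
    match stripOnce I J with
    | none => (I, J)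
    | some (I', J') => stripAux n I' J'

/-- Repeatedly remove the "common part" (equal entries in equal positions). -/
def strip (I J : List ℕ) : List ℕ × List ℕ := stripAux I.length I J

/-- The `s`-th entry (0-indexed) of the list, viewed in `ℕ ∪ {∞}`, with `∞` beyond the end. -/
def entry (l : List ℕ) (s : ℕ) : WithTop ℕ :=
  (l.map (fun a => (a : WithTop ℕ))).getD s ⊤

/-- Non-nesting condition on sorted lists `I`, `J` with `I` the shorter one:
after removing the common part, all consecutive-difference pairs are non-nesting
(with the `∞` convention for the shorter list). -/
def ListsNonNesting (I J : List ℕ) : Prop :=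
  ∀ s : ℕ, s + 1 < (strip I J).2.length →
    PairNonNesting (entry (strip I J).1 s) (entry (strip I J).1 (s+1))
      (entry (strip I J).2 s) (entry (strip I J).2 (s+1))

def ListsNonCrossing (I J : List ℕ) : Prop :=
  ∀ s : ℕ, s + 1 < (strip I J).2.length →
    PairNonCrossing (entry (strip I J).1 s) (entry (strip I J).1 (s+1))
      (entry (strip I J).2 s) (entry (strip I J).2 (s+1))

/-- The increasing list of elements of a finite set. -/
def sortedList (I : Finset ℕ) : List ℕ := I.sort (· ≤ ·)

/-- Subsets `I`, `J` are non-nesting. -/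
def SetsNonNesting (I J : Finset ℕ) : Prop :=
  if I.card ≤ J.card then ListsNonNesting (sortedList I) (sortedList J)
  else ListsNonNesting (sortedList J) (sortedList I)

/-- Subsets `I`, `J` are non-crossing. -/
def SetsNonCrossing (I J : Finset ℕ) : Prop :=
  if I.card ≤ J.card then ListsNonCrossing (sortedList I) (sortedList J)
  else ListsNonCrossing (sortedList J) (sortedList I)

/-- `A ≺ B`: every element of `A` is smaller than every element of `B`. -/
def Precedes (A B : Finset ℕ) : Prop := ∀ a ∈ A, ∀ b ∈ B, a < b

/-- Leclerc–Zelevinsky weak separation. -/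
def WeaklySeparated (I J : Finset ℕ) : Prop :=
  (J.card ≤ I.card ∧ ∃ J₁ J₂ : Finset ℕ, Disjoint J₁ J₂ ∧ J \ I = J₁ ∪ J₂ ∧
    Precedes J₁ (I \ J) ∧ Precedes (I \ J) J₂) ∨
  (I.card ≤ J.card ∧ ∃ I₁ I₂ : Finset ℕ, Disjoint I₁ I₂ ∧ I \ J = I₁ ∪ I₂ ∧
    Precedes I₁ (J \ I) ∧ Precedes (J \ I) I₂)

/-- Number of north steps of the path `p(I)` among its first `k` steps. -/
def northCount (I : Finset ℕ) (k : ℕ) : ℕ := (I.filter (fun i => i ≤ k)).card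

/-- Paths `p(I)`, `p(J)` are non-crossing: one lies weakly northwest of the other
along their entire length. -/
def PathsNonCrossing (I J : Finset ℕ) : Prop :=
  (∀ k, northCount J k ≤ northCount I k) ∨ (∀ k, northCount I k ≤ northCount J k)

/-- `[k₁, k₂]` (in step coordinates) is a proper common part of the paths `p(I)`, `p(J)`
of length `m`: a maximal shared connected subpath containing neither the source nor an
endpoint.  Maximality is expressed by the two paths separating just before `k₁` and just
after `k₂`. -/
def ProperCommonPart (m : ℕ) (I J : Finset ℕ) (k₁ k₂ : ℕ) : Prop :=
  1 ≤ k₁ ∧ k₁ ≤ k₂ ∧ k₂ < m ∧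
  (∀ k, k₁ ≤ k → k ≤ k₂ → northCount I k = northCount J k) ∧
  northCount I (k₁ - 1) ≠ northCount J (k₁ - 1) ∧
  northCount I (k₂ + 1) ≠ northCount J (k₂ + 1)

/-- Paths `p(I)`, `p(J)` are non-kissing: at every proper common part each path leaves
in the same direction in which it entered (the common part is a crossing, not a kiss). -/
def PathsNonKissing (m : ℕ) (I J : Finset ℕ) : Prop :=
  ∀ k₁ k₂, ProperCommonPart m I J k₁ k₂ → ((k₁ ∈ I) ↔ (k₂ + 1 ∈ I))

/-- Number of north steps among the first `k` steps, for `k ∈ ℤ` (zero for `k ≤ 0`). -/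
def northCountZ (I : Finset ℕ) (k : ℤ) : ℤ := (northCount I k.toNat : ℤ)

/-- The indicator Gelfand–Tsetlin pattern of the path `p(I)`: the cell
`[x,x+1] × [y,y+1]` gets a `1` if it lies southeast of the path and `0` if northwest. -/
noncomputable def Tpat (I : Finset ℕ) (x y : ℤ) : ℝ :=
  if y + 1 ≤ northCountZ I (x + y + 1) then 1 else 0

/-- `(x,y)` is a node of the partial staircase `L ⊆ L_m` with set of sink heights `A`:
it lies (weakly) southwest of some sink `(m-j, j)`, `j ∈ A`. -/
def NodeL (m : ℕ) (A : Finset ℕ) (x y : ℤ) : Prop :=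
  0 ≤ x ∧ 0 ≤ y ∧ ∃ j ∈ A, x + j ≤ m ∧ y ≤ j

/-- Same, with natural-number coordinates. -/
def InL (m : ℕ) (A : Finset ℕ) (x y : ℕ) : Prop :=
  ∃ j ∈ A, x + j ≤ m ∧ y ≤ j

/-- The path `p(I)` is contained in the partial staircase with sink heights `A`. -/
def PathInL (m : ℕ) (A : Finset ℕ) (I : Finset ℕ) : Prop :=
  ∀ k ≤ m, InL m A (k - northCount I k) (northCount I k)

/-- A critical node has edges of `L` leaving it toward both the north and the east. -/
def CriticalNode (m : ℕ) (A : Finset ℕ) (x y : ℕ) : Prop :=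
  InL m A (x + 1) y ∧ InL m A x (y + 1)

open Classical in
/-- `N(L)`: the number of critical nodes of the partial staircase. -/
noncomputable def numCritical (m : ℕ) (A : Finset ℕ) : ℕ :=
  ((Finset.range (m+1) ×ˢ Finset.range (m+1)).filter
    (fun p => CriticalNode m A p.1 p.2)).card


/-! The paths of a pairwise non-crossing family are totally ordered from southeast to
northwest.  Remove the southeast-most path `I`; the next path `J` leaves `I` at some node `v`,
where `I` steps east and `J` steps north, so `v` is critical.  Every remaining path lies weakly
northwest of `J`, hence avoids the east neighbour of `v`.  So each removal of a path (but the
last) shrinks the set of critical nodes whose east neighbour lies on a path of the family. -/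

def PassesThrough (I : Finset ℕ) (x y : ℕ) : Prop := northCount I (x + y) = y

section northCount

variable {I : Finset ℕ}

lemma northCount_mono (I : Finset ℕ) : Monotone (northCount I) :=
  fun _ _ h => card_le_card (monotone_filter_right I fun _ _ hi => hi.trans h)

lemma northCount_zero (I : Finset ℕ) : northCount I 0 = if 0 ∈ I then 1 else 0 := by
  unfold northCount
  split_ifs with h <;> simp [filter_eq', h]

lemma northCount_succ (I : Finset ℕ) (k : ℕ) :
    northCount I (k + 1) = northCount I k + if k + 1 ∈ I then 1 else 0 := by
  unfold northCount
  by_cases h : k + 1 ∈ I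
  · have : {i ∈ I | i ≤ k + 1} = insert (k + 1) {i ∈ I | i ≤ k} := by
      ext i
      simp only [mem_filter, mem_insert]
      constructor
      · rintro ⟨hi, hik⟩
        rcases Nat.le_succ_iff.1 hik with hik | rfl
        exacts [Or.inr ⟨hi, hik⟩, Or.inl rfl]
      · rintro (rfl | ⟨hi, hik⟩)
        exacts [⟨h, le_rfl⟩, ⟨hi, hik.trans k.le_succ⟩]
    rw [this, card_insert_of_notMem (by simp), if_pos h]
  · rw [if_neg h, add_zero]
    congr 1
    refine filter_congr fun i hi => ⟨fun hik => ?_, fun hik => hik.trans k.le_succ⟩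
    rcases Nat.le_succ_iff.1 hik with hik | rfl
    exacts [hik, absurd hi h]

lemma northCount_succ_le (I : Finset ℕ) (k : ℕ) : northCount I (k + 1) ≤ northCount I k + 1 := by
  rw [northCount_succ]
  split_ifs <;> omega

lemma northCount_injective : Function.Injective northCount := by
  intro I J h
  ext i
  cases i with
  | zero => have := congrFun h 0; simp only [northCount_zero] at this; split_ifs at this <;> simp_all
  | succ k =>
    have := congrFun h (k + 1)
    rw [northCount_succ, northCount_succ, congrFun h k] at this
    split_ifs at this <;> simp_all

lemma northCount_le_self (h0 : 0 ∉ I) (k : ℕ) : northCount I k ≤ k := by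
  calc northCount I k ≤ #(Icc 1 k) :=
        card_le_card fun i hi => by
          obtain ⟨hiI, hik⟩ := mem_filter.1 hi
          exact mem_Icc.2 ⟨Nat.one_le_iff_ne_zero.2 fun h => h0 (h ▸ hiI), hik⟩
    _ = k := by simp

lemma northCount_of_le {m k : ℕ} (hI : ∀ i ∈ I, i ≤ m) (hk : m ≤ k) :
    northCount I k = northCount I m := by
  unfold northCount
  rw [filter_true_of_mem fun i hi => (hI i hi).trans hk, filter_true_of_mem hI]

end northCount

lemma exists_passesThrough_of_northCount_lt {m : ℕ} {I J : Finset ℕ} (hI : I ⊆ Icc 1 m)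
    (hJ : J ⊆ Icc 1 m) (hIJ : northCount I < northCount J) :
    ∃ x y, x + y < m ∧ PassesThrough I (x + 1) y ∧ PassesThrough J x (y + 1) := by
  have hI0 : 0 ∉ I := fun h => by simpa using hI h
  have hJ0 : 0 ∉ J := fun h => by simpa using hJ h
  have hex : ∃ k, northCount I k < northCount J k := by
    by_contra! h
    exact hIJ.ne (le_antisymm hIJ.le h)
  obtain ⟨k, hk⟩ : ∃ k, Nat.find hex = k + 1 := by
    refine Nat.exists_eq_succ_of_ne_zero fun h0 => ?_
    have := Nat.find_spec hex
    rw [h0, northCount_zero, northCount_zero, if_neg hI0, if_neg hJ0] at this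
    exact this.false
  have hlt : northCount I (k + 1) < northCount J (k + 1) := hk ▸ Nat.find_spec hex
  have hk_eq : northCount I k = northCount J k :=
    le_antisymm (hIJ.le k) (not_lt.1 (Nat.find_min hex (by omega)))
  have hkm : k < m := by
    by_contra! hmk
    have hI_le : ∀ i ∈ I, i ≤ m := fun i hi => (mem_Icc.1 (hI hi)).2
    have hJ_le : ∀ i ∈ J, i ≤ m := fun i hi => (mem_Icc.1 (hJ hi)).2
    have := northCount_of_le hI_le hmk
    have := northCount_of_le hJ_le hmk
    have := northCount_of_le hI_le (hmk.trans (Nat.le_add_right k 1))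
    have := northCount_of_le hJ_le (hmk.trans (Nat.le_add_right k 1))
    omega
  have hIk := northCount_mono I (Nat.le_add_right k 1)
  have hJk := northCount_succ_le J k
  have hyk := northCount_le_self hI0 k
  refine ⟨k - northCount I k, northCount I k, by omega, ?_, ?_⟩ <;> unfold PassesThrough
  · rw [show k - northCount I k + 1 + northCount I k = k + 1 by omega]
    omega
  · rw [show k - northCount I k + (northCount I k + 1) = k + 1 by omega]
    omega

lemma PathInL.inL {m : ℕ} {A I : Finset ℕ} (hI : PathInL m A I) {x y : ℕ}
    (hxy : PassesThrough I x y) (hm : x + y ≤ m) : InL m A x y := by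
  have := hI (x + y) hm
  rwa [show northCount I (x + y) = y from hxy, Nat.add_sub_cancel] at this

lemma CriticalNode.add_lt {m : ℕ} {A : Finset ℕ} {x y : ℕ} (h : CriticalNode m A x y) :
    x + y < m := by
  obtain ⟨j, -, hxj, hyj⟩ := h.1
  omega

lemma exists_northCount_le_of_pathsNonCrossing {P : Finset (Finset ℕ)} (hP : P.Nonempty)
    (hnc : ∀ I ∈ P, ∀ J ∈ P, PathsNonCrossing I J) :
    ∃ I ∈ P, ∀ J ∈ P, northCount I ≤ northCount J := by
  obtain ⟨I, hIP, hImin⟩ := P.exists_minimalFor northCount hP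
  refine ⟨I, hIP, fun J hJP => ?_⟩
  rcases hnc I hIP J hJP with h | h
  exacts [hImin hJP h, h]

section criticalNodes

open Classical

variable {m : ℕ} {A : Finset ℕ}

noncomputable def criticalNodes (m : ℕ) (A : Finset ℕ) : Finset (ℕ × ℕ) :=
  (range (m + 1) ×ˢ range (m + 1)).filter fun v => CriticalNode m A v.1 v.2

lemma mem_criticalNodes {x y : ℕ} : (x, y) ∈ criticalNodes m A ↔ CriticalNode m A x y := by
  refine ⟨fun h => (mem_filter.1 h).2, fun h => ?_⟩
  have := h.add_lt
  simp only [criticalNodes, mem_filter, mem_product, mem_range]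
  exact ⟨⟨by omega, by omega⟩, h⟩

noncomputable def criticalNodesWestOf (m : ℕ) (A : Finset ℕ) (P : Finset (Finset ℕ)) :
    Finset (ℕ × ℕ) :=
  (criticalNodes m A).filter fun v => ∃ I ∈ P, PassesThrough I (v.1 + 1) v.2

lemma criticalNodesWestOf_subset (P : Finset (Finset ℕ)) :
    criticalNodesWestOf m A P ⊆ criticalNodes m A :=
  filter_subset _ _

lemma criticalNodesWestOf_mono {P Q : Finset (Finset ℕ)} (h : P ⊆ Q) :
    criticalNodesWestOf m A P ⊆ criticalNodesWestOf m A Q :=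
  monotone_filter_right _ fun _ _ ⟨I, hI, hIv⟩ => ⟨I, h hI, hIv⟩

lemma criticalNodesWestOf_erase_ssubset {P : Finset (Finset ℕ)} {I : Finset ℕ} (hIP : I ∈ P)
    (hI : ∀ J ∈ P, northCount I ≤ northCount J) (hP : ∀ I ∈ P, I ⊆ Icc 1 m ∧ PathInL m A I)
    (hnc : ∀ I ∈ P, ∀ J ∈ P, PathsNonCrossing I J) (hne : (P.erase I).Nonempty) :
    criticalNodesWestOf m A (P.erase I) ⊂ criticalNodesWestOf m A P := by
  obtain ⟨J, hJP', hJ⟩ := exists_northCount_le_of_pathsNonCrossing hne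
    fun K hK K' hK' => hnc K (mem_of_mem_erase hK) K' (mem_of_mem_erase hK')
  obtain ⟨hJI, hJP⟩ := mem_erase.1 hJP'
  have hIJ : northCount I < northCount J :=
    (hI J hJP).lt_of_ne (northCount_injective.ne hJI.symm)
  obtain ⟨x, y, hxy, hIxy, hJxy⟩ :=
    exists_passesThrough_of_northCount_lt (hP I hIP).1 (hP J hJP).1 hIJ
  have hcrit : CriticalNode m A x y :=
    ⟨(hP I hIP).2.inL hIxy (by omega), (hP J hJP).2.inL hJxy (by omega)⟩
  refine (ssubset_iff_of_subset (criticalNodesWestOf_mono (erase_subset I P))).2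
    ⟨(x, y), mem_filter.2 ⟨mem_criticalNodes.2 hcrit, I, hIP, hIxy⟩, fun h => ?_⟩
  obtain ⟨-, K, hK, hKxy⟩ := mem_filter.1 h
  have hKxy' : northCount K (x + (y + 1)) = y := by
    rw [← Nat.add_assoc, Nat.add_right_comm]
    exact hKxy
  have hJK : northCount J (x + (y + 1)) ≤ northCount K (x + (y + 1)) := hJ K hK _
  unfold PassesThrough at hJxy
  omega

lemma card_le_card_criticalNodesWestOf_add_one (P : Finset (Finset ℕ))
    (hP : ∀ I ∈ P, I ⊆ Icc 1 m ∧ PathInL m A I)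
    (hnc : ∀ I ∈ P, ∀ J ∈ P, PathsNonCrossing I J) :
    #P ≤ #(criticalNodesWestOf m A P) + 1 := by
  induction P using Finset.strongInduction with
  | H P ih =>
  rcases P.eq_empty_or_nonempty with rfl | hPne
  · simp
  obtain ⟨I, hIP, hI⟩ := exists_northCount_le_of_pathsNonCrossing hPne hnc
  rw [← card_erase_add_one hIP]
  rcases (P.erase I).eq_empty_or_nonempty with hempty | hne
  · simp [hempty]
  have ih' := ih (P.erase I) (erase_ssubset hIP) (fun J hJ => hP J (mem_of_mem_erase hJ))
    fun J hJ K hK => hnc J (mem_of_mem_erase hJ) K (mem_of_mem_erase hK)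
  have := card_lt_card (criticalNodesWestOf_erase_ssubset hIP hI hP hnc hne)
  omega

end criticalNodes

theorem nonCrossing_card_le_general (m : ℕ) (A : Finset ℕ)
    (P : Finset (Finset ℕ))
    (hP : ∀ I ∈ P, I ⊆ Finset.Icc 1 m ∧ PathInL m A I)
    (hnc : ∀ I ∈ P, ∀ J ∈ P, PathsNonCrossing I J) :
    P.card ≤ numCritical m A + 1 :=
  (card_le_card_criticalNodesWestOf_add_one P hP hnc).trans
    (Nat.add_le_add_right (card_le_card (criticalNodesWestOf_subset P)) 1)

/-- If `P` is a collection of pairwise non-crossing lattice paths contained in a partial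
staircase `L`, then the number of distinct paths in `P` is at most `N(L) + 1`, the number
of critical nodes of `L` plus one. -/
theorem nonCrossing_card_le (m : ℕ) (A : Finset ℕ) (hA : A ⊆ Finset.range (m+1))
    (P : Finset (Finset ℕ))
    (hP : ∀ I ∈ P, I ⊆ Finset.Icc 1 m ∧ PathInL m A I)
    (hnc : ∀ I ∈ P, ∀ J ∈ P, PathsNonCrossing I J) :
    P.card ≤ numCritical m A + 1 :=
  nonCrossing_card_le_general m A P hP hnc
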